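/- arXiv:1308.6621 — 2 statements merged into one kernel-verified Lean document; each statement's English description precedes it below -/
import Mathlib

section
/- With the convention π_0 = 0, for admissible S ⊆ {1,...,n-1}, the number #\widehat{P}_B(S,n) of signed permutations with peak set S is even if S contains an even number or if n is odd, and is odd otherwise. -/
open Finset

/-- Value at (1-indexed) position `i` of the signed permutation represented by a pair
`(σ, ε)`: the value is `±(σ(i)+1)`, negative iff `ε i = true`. Returns 0 out of range. -/
def bval (n : ℕ) (π : Equiv.Perm (Fin n) × (Fin n → Bool)) (i : ℕ) : ℤ :=
  if h : i - 1 < n then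
    (if π.2 ⟨i - 1, h⟩ then (-1 : ℤ) else 1) * (((π.1 ⟨i - 1, h⟩ : ℕ) : ℤ) + 1)
  else 0

/-- Peak set of a signed permutation: positions `i ∈ {2,…,n-1}` with `π_{i-1} < π_i > π_{i+1}`. -/
def bPeakSet (n : ℕ) (π : Equiv.Perm (Fin n) × (Fin n → Bool)) : Finset ℕ :=
  (Finset.Icc 2 (n - 1)).filter fun i =>
    bval n π (i - 1) < bval n π i ∧ bval n π (i + 1) < bval n π i

/-- `#P_B(S,n)`: number of signed permutations in `B_n` with peak set exactly `S`. -/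
def PB (n : ℕ) (S : Finset ℕ) : ℕ :=
  (Finset.univ.filter fun π : Equiv.Perm (Fin n) × (Fin n → Bool) => bPeakSet n π = S).card

/-- Value with the convention `π_0 = 0`. -/
def bvalHat (n : ℕ) (π : Equiv.Perm (Fin n) × (Fin n → Bool)) (i : ℕ) : ℤ :=
  if i = 0 then 0 else bval n π i

/-- Peak set with `π_0 = 0`: positions `i ∈ {1,…,n-1}` with `π_{i-1} < π_i > π_{i+1}`. -/
def bPeakSetHat (n : ℕ) (π : Equiv.Perm (Fin n) × (Fin n → Bool)) : Finset ℕ :=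
  (Finset.Icc 1 (n - 1)).filter fun i =>
    bvalHat n π (i - 1) < bvalHat n π i ∧ bvalHat n π (i + 1) < bvalHat n π i

/-- `#P̂_B(S,n)`: signed permutations with `π_0 = 0` prepended and peak set exactly `S`. -/
def PBhat (n : ℕ) (S : Finset ℕ) : ℕ :=
  (Finset.univ.filter fun π : Equiv.Perm (Fin n) × (Fin n → Bool) => bPeakSetHat n π = S).card

/-- Value at (1-indexed) position `i` of an ordinary permutation of `{1,…,n}`. -/
def sval (n : ℕ) (π : Equiv.Perm (Fin n)) (i : ℕ) : ℤ :=
  if h : i - 1 < n then ((π ⟨i - 1, h⟩ : ℕ) : ℤ) + 1 else 0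

/-- Peak set of an ordinary permutation: positions `i ∈ {2,…,n-1}`. -/
def sPeakSet (n : ℕ) (π : Equiv.Perm (Fin n)) : Finset ℕ :=
  (Finset.Icc 2 (n - 1)).filter fun i =>
    sval n π (i - 1) < sval n π i ∧ sval n π (i + 1) < sval n π i

/-- `#P(S,n)`: number of permutations of `{1,…,n}` with peak set exactly `S`. -/
def PP (n : ℕ) (S : Finset ℕ) : ℕ :=
  (Finset.univ.filter fun π : Equiv.Perm (Fin n) => sPeakSet n π = S).card

def svalHat (n : ℕ) (π : Equiv.Perm (Fin n)) (i : ℕ) : ℤ :=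
  if i = 0 then 0 else sval n π i

/-- Peak set with the convention `π_0 = 0`: positions `i ∈ {1,…,n-1}`. -/
def sPeakSetHat (n : ℕ) (π : Equiv.Perm (Fin n)) : Finset ℕ :=
  (Finset.Icc 1 (n - 1)).filter fun i =>
    svalHat n π (i - 1) < svalHat n π i ∧ svalHat n π (i + 1) < svalHat n π i

/-- `#P̂(S,n)`: permutations of `{1,…,n}` with `π_0 = 0` prepended and peak set exactly `S`. -/
def PPhat (n : ℕ) (S : Finset ℕ) : ℕ :=
  (Finset.univ.filter fun π : Equiv.Perm (Fin n) => sPeakSetHat n π = S).card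

/-!
Two sign-changing involutions, both preserving the peak set, reduce the count modulo 2.
If `|π|` is not the identity, let `j` be its last descent: `|π_j|` is smaller than `|π_{j-1}|`
and `|π_{j+1}|`, so changing the sign of `π_j` changes no comparison between neighbours.
Hence only the sign vectors of the identity matter; for those, `i` is a peak iff
`π_i > 0 > π_{i+1}`. On them, change the sign of the first odd `p` with `π_{p-1} < 0 < π_{p+1}`,
reading `π_0` as negative and `π_{n+1}` as positive: this keeps the peak set, and since it only
reads even positions it is an involution. A fixed point has every even position up to `n + 1`
negative, which is impossible for `n` odd; for `n` even its peaks are its positive odd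
positions, so exactly one fixed point has peak set `S` when `S` consists of odd numbers, and
none otherwise.
-/

theorem card_modEq_card_fixed_of_involutive {α : Type*} [DecidableEq α] {s : Finset α}
    {f : α → α} (hf : Function.Involutive f) (hs : ∀ a ∈ s, f a ∈ s) :
    #s ≡ #{a ∈ s | f a = a} [MOD 2] := by
  have hmoved : ((#{a ∈ s | f a ≠ a} : ℕ) : ZMod 2) = 0 := by
    rw [card_eq_sum_ones, Nat.cast_sum]
    refine sum_involution (fun a _ => f a) (fun _ _ => by decide)
      (fun a ha _ => (mem_filter.1 ha).2) (fun a ha => ?_) (fun a _ => hf a)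
    obtain ⟨has, hfa⟩ := mem_filter.1 ha
    exact mem_filter.2 ⟨hs a has, fun h => hfa (by rw [← h, hf a])⟩
  rw [← ZMod.natCast_eq_natCast_iff, ← card_filter_add_card_filter_not (fun a => f a = a)]
  push_cast
  rw [hmoved, add_zero]

lemma neg_lt_iff_lt_of_abs_lt {a b : ℤ} (h : |a| < |b|) : -a < b ↔ a < b := by
  rcases abs_cases a with ⟨_, _⟩ | ⟨_, _⟩ <;> rcases abs_cases b with ⟨_, _⟩ | ⟨_, _⟩ <;> omega

lemma lt_neg_iff_lt_of_abs_lt {a b : ℤ} (h : |a| < |b|) : b < -a ↔ b < a := by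
  rcases abs_cases a with ⟨_, _⟩ | ⟨_, _⟩ <;> rcases abs_cases b with ⟨_, _⟩ | ⟨_, _⟩ <;> omega

abbrev SignedPerm (n : ℕ) : Type := Equiv.Perm (Fin n) × (Fin n → Bool)

section

variable {n : ℕ}

def flipAt (ε : Fin n → Bool) (p : ℕ) : Fin n → Bool :=
  fun k => if (k : ℕ) + 1 = p then !ε k else ε k

lemma flipAt_flipAt (ε : Fin n → Bool) (p : ℕ) : flipAt (flipAt ε p) p = ε := by
  funext k
  unfold flipAt
  split_ifs <;> simp

lemma flipAt_ne_self (ε : Fin n → Bool) {p : ℕ} (hp₀ : 1 ≤ p) (hpn : p ≤ n) :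
    flipAt ε p ≠ ε := by
  intro h
  have := congrFun h ⟨p - 1, by omega⟩
  simp [flipAt, show p - 1 + 1 = p by omega] at this

lemma bvalHat_flipAt (σ : Equiv.Perm (Fin n)) (ε : Fin n → Bool) (j p : ℕ) :
    bvalHat n (σ, flipAt ε j) p = if p = j then -bvalHat n (σ, ε) p else bvalHat n (σ, ε) p := by
  unfold bvalHat bval flipAt
  split_ifs <;> simp_all <;> omega

lemma abs_bvalHat (x : SignedPerm n) (p : ℕ) : |bvalHat n x p| = svalHat n x.1 p := by
  unfold bvalHat svalHat bval sval
  split_ifs <;> simp only [abs_zero, abs_mul, abs_neg, abs_one, one_mul] <;>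
    exact abs_of_nonneg (by positivity)

lemma svalHat_succ (σ : Equiv.Perm (Fin n)) (k : Fin n) :
    svalHat n σ (k + 1) = (σ k : ℤ) + 1 := by
  simp [svalHat, sval]

lemma svalHat_injOn (σ : Equiv.Perm (Fin n)) : Set.InjOn (svalHat n σ) (Set.Icc 1 n) := by
  intro p hp q hq h
  obtain ⟨k, rfl⟩ : ∃ k : Fin n, (k : ℕ) + 1 = p := ⟨⟨p - 1, by grind⟩, by grind⟩
  obtain ⟨l, rfl⟩ : ∃ l : Fin n, (l : ℕ) + 1 = q := ⟨⟨q - 1, by grind⟩, by grind⟩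
  rw [svalHat_succ, svalHat_succ, add_left_inj, Nat.cast_inj, Fin.val_inj, σ.injective.eq_iff] at h
  rw [h]

lemma bPeakSetHat_eq_of_adjacent_lt_iff {x y : SignedPerm n}
    (h : ∀ i < n, (bvalHat n x i < bvalHat n x (i + 1) ↔ bvalHat n y i < bvalHat n y (i + 1)) ∧
      (bvalHat n x (i + 1) < bvalHat n x i ↔ bvalHat n y (i + 1) < bvalHat n y i)) :
    bPeakSetHat n x = bPeakSetHat n y := by
  ext i
  simp only [bPeakSetHat, mem_filter, mem_Icc]
  refine and_congr_right fun hi => and_congr ?_ (h i (by omega)).2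
  simpa only [Nat.sub_add_cancel hi.1] using (h (i - 1) (by omega)).1

lemma bPeakSetHat_flipAt_of_abs_lt {σ : Equiv.Perm (Fin n)} {ε : Fin n → Bool} {j : ℕ}
    (hprev : svalHat n σ j < svalHat n σ (j - 1))
    (hnext : j < n → svalHat n σ j < svalHat n σ (j + 1)) :
    bPeakSetHat n (σ, flipAt ε j) = bPeakSetHat n (σ, ε) := by
  refine bPeakSetHat_eq_of_adjacent_lt_iff fun i hi => ?_
  have habs (p : ℕ) : |bvalHat n (σ, ε) p| = svalHat n σ p := abs_bvalHat _ p
  simp only [bvalHat_flipAt]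
  by_cases hij : i = j
  · subst hij
    have hlt : |bvalHat n (σ, ε) i| < |bvalHat n (σ, ε) (i + 1)| := by
      rw [habs, habs]; exact hnext hi
    rw [if_pos rfl, if_neg (by omega)]
    exact ⟨neg_lt_iff_lt_of_abs_lt hlt, lt_neg_iff_lt_of_abs_lt hlt⟩
  by_cases hij' : i + 1 = j
  · subst hij'
    have hlt : |bvalHat n (σ, ε) (i + 1)| < |bvalHat n (σ, ε) i| := by
      rw [habs, habs]; simpa using hprev
    rw [if_neg hij, if_pos rfl]
    exact ⟨lt_neg_iff_lt_of_abs_lt hlt, neg_lt_iff_lt_of_abs_lt hlt⟩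
  rw [if_neg hij, if_neg hij']
  exact ⟨Iff.rfl, Iff.rfl⟩

def descents (σ : Equiv.Perm (Fin n)) : Finset ℕ :=
  {p ∈ Icc 2 n | svalHat n σ p < svalHat n σ (p - 1)}

lemma svalHat_one {p : ℕ} (hp : p ≠ 0) (hpn : p ≤ n) : svalHat n 1 p = p := by
  simp only [svalHat, sval, if_neg hp, dif_pos (show p - 1 < n by omega), Equiv.Perm.one_apply]
  omega

lemma descents_one : descents (1 : Equiv.Perm (Fin n)) = ∅ := by
  refine filter_eq_empty_iff.2 fun p hp => ?_
  rw [mem_Icc] at hp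
  rw [svalHat_one (by omega) hp.2, svalHat_one (by omega) (by omega)]
  omega

lemma eq_one_of_descents_eq_empty {σ : Equiv.Perm (Fin n)} (h : descents σ = ∅) : σ = 1 := by
  suffices hmono : StrictMono σ from Equiv.ext (congrFun hmono.eq_id)
  cases n with
  | zero => exact fun a => a.elim0
  | succ m =>
    refine Fin.strictMono_iff_lt_succ.2 fun k => ?_
    have hk : (k : ℕ) + 2 ∉ descents σ := by rw [h]; exact notMem_empty _
    simp only [descents, mem_filter, mem_Icc, not_and, not_lt] at hk
    have hle := hk ⟨by omega, by omega⟩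
    rw [show (k : ℕ) + 2 - 1 = (k.castSucc : ℕ) + 1 from rfl,
      show (k : ℕ) + 2 = (k.succ : ℕ) + 1 from rfl, svalHat_succ, svalHat_succ] at hle
    refine lt_of_le_of_ne ?_ (σ.injective.ne Fin.castSucc_lt_succ.ne)
    rw [Fin.le_iff_val_le_val]
    omega

def flipLastDescent (x : SignedPerm n) : SignedPerm n :=
  if h : (descents x.1).Nonempty then (x.1, flipAt x.2 ((descents x.1).max' h)) else x

lemma flipLastDescent_involutive : Function.Involutive (flipLastDescent (n := n)) := by
  intro x
  by_cases h : (descents x.1).Nonempty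
  · simp [flipLastDescent, h, flipAt_flipAt]
  · simp [flipLastDescent, h]

lemma bPeakSetHat_flipLastDescent (x : SignedPerm n) :
    bPeakSetHat n (flipLastDescent x) = bPeakSetHat n x := by
  unfold flipLastDescent
  split_ifs with h
  · set j := (descents x.1).max' h
    have hj : j ∈ descents x.1 := max'_mem _ h
    simp only [descents, mem_filter, mem_Icc] at hj
    refine bPeakSetHat_flipAt_of_abs_lt hj.2 fun hjn => ?_
    have hnext : j + 1 ∉ descents x.1 := fun hmem => by
      have := le_max' _ _ hmem
      omega
    simp only [descents, mem_filter, mem_Icc, Nat.add_sub_cancel, not_and, not_lt] at hnext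
    exact lt_of_le_of_ne (hnext ⟨by omega, hjn⟩)
      ((svalHat_injOn x.1).ne ⟨by omega, by omega⟩ ⟨by omega, hjn⟩ (by omega))
  · rfl

lemma flipLastDescent_eq_self_iff {x : SignedPerm n} : flipLastDescent x = x ↔ x.1 = 1 := by
  unfold flipLastDescent
  split_ifs with h
  · refine iff_of_false (fun hx => ?_) (fun h1 => ?_)
    · have hj := max'_mem _ h
      simp only [descents, mem_filter, mem_Icc] at hj
      exact flipAt_ne_self x.2 (by omega) hj.1.2 (congrArg Prod.snd hx)
    · rw [h1, descents_one] at h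
      exact not_nonempty_empty h
  · exact iff_of_true rfl (eq_one_of_descents_eq_empty (not_nonempty_iff_eq_empty.1 h))

theorem PBhat_modEq_card (S : Finset ℕ) :
    PBhat n S ≡ #{ε : Fin n → Bool | bPeakSetHat n (1, ε) = S} [MOD 2] := by
  refine (card_modEq_card_fixed_of_involutive flipLastDescent_involutive fun x hx => ?_).trans ?_
  · simpa [bPeakSetHat_flipLastDescent] using hx
  · refine congrArg (· % 2) (card_nbij' Prod.snd (fun ε => (1, ε)) ?_ ?_ ?_ ?_)
    · rintro ⟨σ, ε⟩ hx
      simp only [mem_coe, mem_filter, mem_univ, true_and, flipLastDescent_eq_self_iff] at hx ⊢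
      obtain ⟨hS, rfl⟩ := hx
      exact hS
    · intro ε hε
      simp_all [flipLastDescent_eq_self_iff]
    · rintro ⟨σ, ε⟩ hx
      simp_all [flipLastDescent_eq_self_iff]
    · intro ε hε
      rfl

/-- The sign of position `p` of `(1, ε)`, reading `π_0` as negative and `π_{n+1}` as positive:
with this convention the peaks are the `i` with `negAt ε i = false` and `negAt ε (i + 1) = true`,
no range condition needed. -/
def negAt (ε : Fin n → Bool) (p : ℕ) : Bool :=
  if p = 0 then true else if h : p - 1 < n then ε ⟨p - 1, h⟩ else false

def signPeaks (ε : Fin n → Bool) : Finset ℕ :=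
  {i ∈ Icc 1 (n - 1) | negAt ε i = false ∧ negAt ε (i + 1) = true}

lemma mem_signPeaks {ε : Fin n → Bool} {i : ℕ} :
    i ∈ signPeaks ε ↔ negAt ε i = false ∧ negAt ε (i + 1) = true := by
  simp only [signPeaks, mem_filter, mem_Icc]
  refine ⟨fun h => h.2, fun h => ⟨?_, h⟩⟩
  unfold negAt at h
  split_ifs at h <;> simp_all <;> omega

lemma bvalHat_one (ε : Fin n → Bool) {p : ℕ} (hp : p ≤ n) :
    bvalHat n (1, ε) p = if negAt ε p then -(p : ℤ) else p := by
  unfold bvalHat bval negAt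
  split_ifs <;> simp_all <;> omega

lemma bPeakSetHat_one (ε : Fin n → Bool) : bPeakSetHat n (1, ε) = signPeaks ε := by
  ext i
  simp only [bPeakSetHat, signPeaks, mem_filter, mem_Icc]
  refine and_congr_right fun hi => ?_
  rw [bvalHat_one ε (by omega), bvalHat_one ε (by omega), bvalHat_one ε (by omega)]
  cases negAt ε (i - 1) <;> cases negAt ε i <;> cases negAt ε (i + 1) <;> simp <;> omega

lemma negAt_flipAt_of_ne (ε : Fin n → Bool) {j p : ℕ} (h : p ≠ j) :
    negAt (flipAt ε j) p = negAt ε p := by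
  unfold negAt flipAt
  split_ifs <;> grind

/-- Odd positions whose sign can be changed without changing `signPeaks`. Membership only reads
even positions, so changing the sign at an odd position does not change this set. -/
def oddFlippable (ε : Fin n → Bool) : Finset ℕ :=
  {p ∈ Icc 1 n | Odd p ∧ negAt ε (p - 1) = true ∧ negAt ε (p + 1) = false}

lemma oddFlippable_flipAt (ε : Fin n → Bool) {j : ℕ} (hj : Odd j) :
    oddFlippable (flipAt ε j) = oddFlippable ε := by
  ext p
  simp only [oddFlippable, mem_filter]
  refine and_congr_right fun hp => and_congr_right fun hodd => ?_
  rw [negAt_flipAt_of_ne ε (by grind), negAt_flipAt_of_ne ε (by grind)]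

lemma signPeaks_flipAt {ε : Fin n → Bool} {j : ℕ} (hj : j ∈ oddFlippable ε) :
    signPeaks (flipAt ε j) = signPeaks ε := by
  simp only [oddFlippable, mem_filter] at hj
  ext i
  simp only [mem_signPeaks]
  by_cases hij : i = j
  · subst hij
    rw [negAt_flipAt_of_ne ε (p := i + 1) (by omega), hj.2.2.2]
    simp
  by_cases hij' : i + 1 = j
  · subst hij'
    rw [negAt_flipAt_of_ne ε hij, show negAt ε i = true by simpa using hj.2.2.1]
    simp
  rw [negAt_flipAt_of_ne ε hij, negAt_flipAt_of_ne ε hij']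

def flipFirstOdd (ε : Fin n → Bool) : Fin n → Bool :=
  if h : (oddFlippable ε).Nonempty then flipAt ε ((oddFlippable ε).min' h) else ε

lemma flipFirstOdd_involutive : Function.Involutive (flipFirstOdd (n := n)) := by
  intro ε
  by_cases h : (oddFlippable ε).Nonempty
  · have hodd : Odd ((oddFlippable ε).min' h) := by
      have := min'_mem _ h
      simp only [oddFlippable, mem_filter] at this
      exact this.2.1
    simp [flipFirstOdd, h, oddFlippable_flipAt ε hodd, flipAt_flipAt]
  · simp [flipFirstOdd, h]

lemma signPeaks_flipFirstOdd (ε : Fin n → Bool) : signPeaks (flipFirstOdd ε) = signPeaks ε := by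
  unfold flipFirstOdd
  split_ifs with h
  · exact signPeaks_flipAt (min'_mem _ h)
  · rfl

lemma flipFirstOdd_eq_self_iff {ε : Fin n → Bool} : flipFirstOdd ε = ε ↔ oddFlippable ε = ∅ := by
  unfold flipFirstOdd
  split_ifs with h
  · have hj := min'_mem _ h
    simp only [oddFlippable, mem_filter, mem_Icc] at hj
    exact iff_of_false (flipAt_ne_self ε hj.1.1 hj.1.2) (nonempty_iff_ne_empty.1 h)
  · exact iff_of_true rfl (not_nonempty_iff_eq_empty.1 h)

lemma negAt_succ (ε : Fin n → Bool) (k : Fin n) : negAt ε (k + 1) = ε k := by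
  simp [negAt]

lemma negAt_even_of_oddFlippable_eq_empty {ε : Fin n → Bool} (h : oddFlippable ε = ∅)
    {m : ℕ} (hm : 2 * m ≤ n + 1) : negAt ε (2 * m) = true := by
  induction m with
  | zero => simp [negAt]
  | succ m ih =>
    have hnot : 2 * m + 1 ∉ oddFlippable ε := h ▸ notMem_empty _
    simp only [oddFlippable, mem_filter, mem_Icc, Nat.add_sub_cancel, not_and] at hnot
    by_contra hneg
    exact hnot ⟨by omega, by omega⟩ (odd_two_mul_add_one m) (ih (by omega))
      (by simpa [mul_add] using hneg)

lemma oddFlippable_nonempty_of_odd (hn : Odd n) (ε : Fin n → Bool) :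
    (oddFlippable ε).Nonempty := by
  rw [nonempty_iff_ne_empty]
  intro h
  obtain ⟨m, rfl⟩ := hn
  have := negAt_even_of_oddFlippable_eq_empty h (m := m + 1) (by omega)
  rw [negAt, if_neg (by omega), dif_neg (by omega)] at this
  exact Bool.false_ne_true this

def oddPeakSigns (n : ℕ) (S : Finset ℕ) : Fin n → Bool :=
  fun k => decide (Even ((k : ℕ) + 1) ∨ (k : ℕ) + 1 ∉ S)

lemma negAt_oddPeakSigns (S : Finset ℕ) (p : ℕ) :
    negAt (oddPeakSigns n S) p = decide (p = 0 ∨ p ≤ n ∧ (Even p ∨ p ∉ S)) := by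
  unfold negAt oddPeakSigns
  split_ifs <;> simp_all <;> grind

lemma signPeaks_eq_and_oddFlippable_eq_empty_iff {S : Finset ℕ} (hn : Even n)
    (hS : S ⊆ Icc 1 (n - 1)) {ε : Fin n → Bool} :
    signPeaks ε = S ∧ oddFlippable ε = ∅ ↔ (∀ i ∈ S, Odd i) ∧ ε = oddPeakSigns n S := by
  constructor
  · rintro ⟨hpeaks, h⟩
    have hneg {q : ℕ} (hq : q ≤ n + 1) (he : Even q) : negAt ε q = true := by
      obtain ⟨m, rfl⟩ := he
      simpa [two_mul] using negAt_even_of_oddFlippable_eq_empty h (m := m) (by omega)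
    refine ⟨fun i hi => ?_, funext fun k => ?_⟩
    · have hi' := mem_signPeaks.1 (hpeaks ▸ hi)
      have hiS := mem_Icc.1 (hS hi)
      by_contra hodd
      simp [hneg (by omega) (Nat.not_odd_iff_even.1 hodd)] at hi'
    · rw [← negAt_succ ε k, ← negAt_succ (oddPeakSigns n S) k, negAt_oddPeakSigns]
      have hk := k.isLt
      by_cases hp : Even ((k : ℕ) + 1)
      · simp [hneg (by omega) hp, hp]
      · have hnext : negAt ε (k + 1 + 1) = true :=
          hneg (by omega) (Nat.not_even_iff_odd.1 hp).add_one
        have hmem : (k : ℕ) + 1 ∈ S ↔ negAt ε (k + 1) = false := by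
          rw [← hpeaks, mem_signPeaks, hnext]; exact and_iff_left rfl
        cases h : negAt ε (k + 1) <;> simp_all
  · rintro ⟨hodd, rfl⟩
    refine ⟨?_, filter_eq_empty_iff.2 fun p hp => ?_⟩
    · ext i
      rw [mem_signPeaks, negAt_oddPeakSigns, negAt_oddPeakSigns]
      have hiS := @hS i
      have hiodd := hodd i
      simp only [mem_Icc, Nat.even_add_one] at hiS hiodd ⊢
      grind
    · rw [mem_Icc] at hp
      rw [negAt_oddPeakSigns, negAt_oddPeakSigns]
      grind

lemma card_signPeaks_eq_and_oddFlippable_eq_empty {S : Finset ℕ} (hS : S ⊆ Icc 1 (n - 1)) :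
    #{ε : Fin n → Bool | signPeaks ε = S ∧ oddFlippable ε = ∅} =
      if Even n ∧ ∀ i ∈ S, Odd i then 1 else 0 := by
  split_ifs with h
  · rw [card_eq_one]
    refine ⟨oddPeakSigns n S, ?_⟩
    ext ε
    simp only [mem_filter, mem_univ, true_and, mem_singleton,
      signPeaks_eq_and_oddFlippable_eq_empty_iff h.1 hS]
    exact and_iff_right h.2
  · rw [card_eq_zero, filter_eq_empty_iff]
    intro ε _ hε
    by_cases hn : Even n
    · exact h ⟨hn, ((signPeaks_eq_and_oddFlippable_eq_empty_iff hn hS).1 hε).1⟩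
    · exact (oddFlippable_nonempty_of_odd (Nat.not_even_iff_odd.1 hn) ε).ne_empty hε.2

theorem card_signPeaks_modEq {S : Finset ℕ} (hS : S ⊆ Icc 1 (n - 1)) :
    #{ε : Fin n → Bool | signPeaks ε = S} ≡
      if Even n ∧ ∀ i ∈ S, Odd i then 1 else 0 [MOD 2] := by
  refine (card_modEq_card_fixed_of_involutive flipFirstOdd_involutive fun ε hε => ?_).trans ?_
  · simpa [signPeaks_flipFirstOdd] using hε
  · rw [← card_signPeaks_eq_and_oddFlippable_eq_empty hS, filter_filter]
    simp only [flipFirstOdd_eq_self_iff]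
    rfl

end

theorem stmt10_general (n : ℕ) (S : Finset ℕ)
    (hS : S ⊆ Finset.Icc 1 (n - 1)) :
    Even (PBhat n S) ↔ ((∃ i ∈ S, Even i) ∨ Odd n) := by
  have hmod : PBhat n S ≡ if Even n ∧ ∀ i ∈ S, Odd i then 1 else 0 [MOD 2] := by
    refine (PBhat_modEq_card S).trans ?_
    simpa only [bPeakSetHat_one] using card_signPeaks_modEq hS
  have hcond : ((∃ i ∈ S, Even i) ∨ Odd n) ↔ ¬(Even n ∧ ∀ i ∈ S, Odd i) := by
    simp only [not_and_or, not_forall, Nat.not_odd_iff_even, Nat.not_even_iff_odd, exists_prop]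
    exact or_comm
  rw [Nat.even_iff, hmod, hcond]
  split_ifs with h
  · exact iff_of_false (by decide) (not_not.2 h)
  · exact iff_of_true rfl h

/-- with `π_0 = 0`, `#P̂_B(S,n)` is even iff `S` contains an even number
or `n` is odd; otherwise it is odd. -/
theorem stmt10 (n : ℕ) (S : Finset ℕ)
    (hS : S ⊆ Finset.Icc 1 (n - 1)) (hcons : ∀ i ∈ S, i + 1 ∉ S) :
    Even (PBhat n S) ↔ ((∃ i ∈ S, Even i) ∨ Odd n) :=
  stmt10_general n S hS
end

section
/- If S is admissible and 2 ∈ S, then #P_B(S,n) = #\widehat{P}_B(S,n). -/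
open Finset

/-! The conventions `π_0 = 0` and the absence of `π_0` can disagree only about whether position 1
is a peak, and `2 ∈ S` forces `π_1 < π_2`, so position 1 is not a peak under either convention. -/

section PeakSets

variable {n : ℕ} (π : Equiv.Perm (Fin n) × (Fin n → Bool))

lemma bvalHat_of_ne_zero {i : ℕ} (hi : i ≠ 0) : bvalHat n π i = bval n π i :=
  if_neg hi

lemma bPeakSetHat_eq_bPeakSet (h : bval n π 1 < bval n π 2) :
    bPeakSetHat n π = bPeakSet n π := by
  ext i
  simp only [bPeakSetHat, bPeakSet, mem_filter, mem_Icc]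
  rcases Nat.lt_or_ge i 2 with hi | hi
  · constructor
    · rintro ⟨⟨h1i, -⟩, -, hpeak⟩
      obtain rfl : i = 1 := by omega
      rw [bvalHat_of_ne_zero π one_ne_zero, bvalHat_of_ne_zero π two_ne_zero] at hpeak
      exact absurd hpeak h.le.not_gt
    · rintro ⟨⟨h2i, -⟩, -⟩
      omega
  · simp only [bvalHat_of_ne_zero π (show i - 1 ≠ 0 by omega),
      bvalHat_of_ne_zero π (show i ≠ 0 by omega), bvalHat_of_ne_zero π (show i + 1 ≠ 0 by omega)]
    constructor
    · rintro ⟨⟨-, hin⟩, hpeak⟩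
      exact ⟨⟨hi, hin⟩, hpeak⟩
    · rintro ⟨⟨-, hin⟩, hpeak⟩
      exact ⟨⟨by omega, hin⟩, hpeak⟩

lemma bval_one_lt_two_of_two_mem_bPeakSet (h : 2 ∈ bPeakSet n π) : bval n π 1 < bval n π 2 :=
  (mem_filter.1 h).2.1

lemma bval_one_lt_two_of_two_mem_bPeakSetHat (h : 2 ∈ bPeakSetHat n π) :
    bval n π 1 < bval n π 2 := by
  have hpeak : bvalHat n π 1 < bvalHat n π 2 := (mem_filter.1 h).2.1
  rwa [bvalHat_of_ne_zero π one_ne_zero, bvalHat_of_ne_zero π two_ne_zero] at hpeak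

end PeakSets

theorem stmt12_general (n : ℕ) (S : Finset ℕ) (h2 : 2 ∈ S) : PB n S = PBhat n S := by
  unfold PB PBhat
  congr 1
  refine filter_congr fun π _ => ⟨?_, ?_⟩ <;> rintro rfl
  · exact bPeakSetHat_eq_bPeakSet π (bval_one_lt_two_of_two_mem_bPeakSet π h2)
  · exact (bPeakSetHat_eq_bPeakSet π (bval_one_lt_two_of_two_mem_bPeakSetHat π h2)).symm

/-- if `2 ∈ S` then `#P_B(S,n) = #P̂_B(S,n)`. -/
theorem stmt12 (n : ℕ) (S : Finset ℕ)
    (hS : S ⊆ Finset.Icc 1 (n - 1)) (hcons : ∀ i ∈ S, i + 1 ∉ S) (h2 : 2 ∈ S) :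
    PB n S = PBhat n S :=
  stmt12_general n S h2
end
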